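/- arXiv:2303.14858 — 5 statements merged into one kernel-verified Lean document; each statement's English description precedes it below -/
import Mathlib

section
/- Let n ≥ 1, a, b ∈ ℝⁿ, and β ∈ [0,1]. If ⟨b⟩ ≥ β⟨a−b⟩, then ⟨a⟩^{1/2} ≤ ⟨b⟩^{1/2} + (1 − √β/2)·⟨a−b⟩^{1/2}. -/
/-!
Since `⟨a⟩ ≤ ⟨b⟩ + ⟨a - b⟩`, it suffices to show `√(x + y) ≤ √x + (1 - √β/2) √y` whenever
`β y ≤ x`. With `u = √x`, `v = √y`, `c = √β` the hypothesis reads `c v ≤ u`, so the cross term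
`2 (1 - c/2) u v` is at least `(2c - c²) v²`, and `u² + v² ≤ (u + (1 - c/2) v)²` reduces to
`c (1 - 3c/4) ≥ 0`.
-/

/-- Japanese bracket of a vector in `EuclideanSpace ℝ (Fin n)`. -/
noncomputable def jbVec {n : ℕ} (x : EuclideanSpace ℝ (Fin n)) : ℝ :=
  Real.sqrt (1 + ‖x‖ ^ 2)

lemma sqrt_one_add_sq_add_le (s t : ℝ) :
    √(1 + (s + t) ^ 2) ≤ √(1 + s ^ 2) + √(1 + t ^ 2) := by
  have hcross : s * t ≤ √(1 + s ^ 2) * √(1 + t ^ 2) :=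
    calc s * t ≤ |s * t| := le_abs_self _
      _ = √((s * t) ^ 2) := (Real.sqrt_sq_eq_abs _).symm
      _ ≤ √((1 + s ^ 2) * (1 + t ^ 2)) :=
        Real.sqrt_le_sqrt (by nlinarith [sq_nonneg s, sq_nonneg t])
      _ = √(1 + s ^ 2) * √(1 + t ^ 2) := Real.sqrt_mul (by positivity) _
  rw [Real.sqrt_le_left (by positivity)]
  nlinarith [Real.sq_sqrt (by positivity : (0 : ℝ) ≤ 1 + s ^ 2),
    Real.sq_sqrt (by positivity : (0 : ℝ) ≤ 1 + t ^ 2)]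

lemma jbVec_add_le {n : ℕ} (x y : EuclideanSpace ℝ (Fin n)) :
    jbVec (x + y) ≤ jbVec x + jbVec y :=
  calc jbVec (x + y) ≤ √(1 + (‖x‖ + ‖y‖) ^ 2) := by
        unfold jbVec
        gcongr
        exact norm_add_le x y
    _ ≤ jbVec x + jbVec y := sqrt_one_add_sq_add_le _ _

lemma sq_add_sq_le_sq_add_mul {u v c : ℝ} (hv : 0 ≤ v) (hc : 0 ≤ c) (hc₁ : c ≤ 1)
    (hcv : c * v ≤ u) : u ^ 2 + v ^ 2 ≤ (u + (1 - c / 2) * v) ^ 2 := by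
  have hcross : c * v * v ≤ u * v := mul_le_mul_of_nonneg_right hcv hv
  nlinarith [mul_nonneg (mul_nonneg hc (sub_nonneg.2 hc₁)) (mul_nonneg hv hv)]

lemma sqrt_add_le_sqrt_add_mul_sqrt {x y β : ℝ} (hy : 0 ≤ y) (hβ : β ∈ Set.Icc (0 : ℝ) 1)
    (h : β * y ≤ x) : √(x + y) ≤ √x + (1 - √β / 2) * √y := by
  have hcv : √β * √y ≤ √x := by
    rw [← Real.sqrt_mul hβ.1]
    exact Real.sqrt_le_sqrt h
  have hx : 0 ≤ x := le_trans (mul_nonneg hβ.1 hy) h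
  have hc₁ : √β ≤ 1 := Real.sqrt_le_one.2 hβ.2
  rw [Real.sqrt_le_left (by nlinarith [Real.sqrt_nonneg β, Real.sqrt_nonneg y, Real.sqrt_nonneg x])]
  calc x + y = √x ^ 2 + √y ^ 2 := by rw [Real.sq_sqrt hx, Real.sq_sqrt hy]
    _ ≤ _ := sq_add_sq_le_sq_add_mul (Real.sqrt_nonneg y) (Real.sqrt_nonneg β) hc₁ hcv

theorem stmt0_general (n : ℕ) (a b : EuclideanSpace ℝ (Fin n))
    (β : ℝ) (hβ : β ∈ Set.Icc (0 : ℝ) 1)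
    (h : jbVec b ≥ β * jbVec (a - b)) :
    (jbVec a) ^ ((1 : ℝ) / 2) ≤
      (jbVec b) ^ ((1 : ℝ) / 2) +
        (1 - Real.sqrt β / 2) * (jbVec (a - b)) ^ ((1 : ℝ) / 2) := by
  simp only [← Real.sqrt_eq_rpow]
  have htri : jbVec a ≤ jbVec b + jbVec (a - b) := by
    simpa using jbVec_add_le b (a - b)
  calc √(jbVec a) ≤ √(jbVec b + jbVec (a - b)) := Real.sqrt_le_sqrt htri
    _ ≤ _ := sqrt_add_le_sqrt_add_mul_sqrt (Real.sqrt_nonneg _) hβ h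

/-- If `⟨b⟩ ≥ β⟨a−b⟩` with `β ∈ [0,1]`, then
`⟨a⟩^{1/2} ≤ ⟨b⟩^{1/2} + (1 − √β/2)⟨a−b⟩^{1/2}`. -/
theorem stmt0 (n : ℕ) (hn : 1 ≤ n) (a b : EuclideanSpace ℝ (Fin n))
    (β : ℝ) (hβ : β ∈ Set.Icc (0 : ℝ) 1)
    (h : jbVec b ≥ β * jbVec (a - b)) :
    (jbVec a) ^ ((1 : ℝ) / 2) ≤
      (jbVec b) ^ ((1 : ℝ) / 2) +
        (1 - Real.sqrt β / 2) * (jbVec (a - b)) ^ ((1 : ℝ) / 2) :=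
  stmt0_general n a b β hβ h
end

section
/- There exists an absolute constant C > 0 such that for all t ≥ 0, all nonzero integers k, l, and all ξ, η ∈ ℝ: [⟨t⟩(⟨t⟩ + |(k,ξ)|)/(|k|·⟨ξ/k⟩²·⟨t − ξ/k⟩)] · [(⟨t⟩ + |η/l|)/(⟨t⟩·⟨t − η/l⟩²)] ≤ C · ⟨η/l⟩/(⟨ξ/k⟩·⟨t − η/l⟩). -/
/-- Japanese bracket `⟨a⟩ = (1 + a²)^{1/2}` of a real number. -/
noncomputable def jb (a : ℝ) : ℝ := Real.sqrt (1 + a ^ 2)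

/-!
Write `u = ξ/k`, `v = η/l`. Since `|(k,ξ)| = |k|⟨u⟩`, the claim reduces, after cancelling, to
`(⟨t⟩ + |k|⟨u⟩)(⟨t⟩ + |v|) ≤ C |k| ⟨u⟩⟨t - u⟩ ⟨v⟩⟨t - v⟩`. Both factors are handled by Peetre's
inequality `⟨t⟩ ≤ 2⟨u⟩⟨t - u⟩`, which gives `⟨t⟩ + ⟨u⟩ ≤ 3⟨u⟩⟨t - u⟩`; the constant is `C = 9`.
-/

lemma one_le_jb (a : ℝ) : 1 ≤ jb a :=
  Real.one_le_sqrt.mpr (by nlinarith [sq_nonneg a])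

lemma jb_pos (a : ℝ) : 0 < jb a := one_pos.trans_le (one_le_jb a)

lemma abs_le_jb (a : ℝ) : |a| ≤ jb a := by
  rw [jb, ← Real.sqrt_sq_eq_abs]
  exact Real.sqrt_le_sqrt (by nlinarith)

lemma jb_le_two_mul_jb_mul_jb_sub (t u : ℝ) : jb t ≤ 2 * jb u * jb (t - u) := by
  have h : 2 * jb u * jb (t - u) = Real.sqrt (4 * ((1 + u ^ 2) * (1 + (t - u) ^ 2))) := by
    rw [Real.sqrt_mul (by norm_num), Real.sqrt_mul (by positivity),
      show (4 : ℝ) = 2 ^ 2 by norm_num, Real.sqrt_sq (by norm_num), jb, jb, mul_assoc]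
  rw [h, jb]
  exact Real.sqrt_le_sqrt (by nlinarith [sq_nonneg (t - 2 * u), sq_nonneg (u * (t - u))])

lemma jb_add_jb_le (t u : ℝ) : jb t + jb u ≤ 3 * jb u * jb (t - u) := by
  nlinarith [jb_le_two_mul_jb_mul_jb_sub t u, jb_pos u, one_le_jb (t - u)]

lemma jb_add_abs_le (t v : ℝ) : jb t + |v| ≤ 3 * jb v * jb (t - v) :=
  (add_le_add_right (abs_le_jb v) _).trans (jb_add_jb_le t v)

lemma jb_add_mul_jb_le {K : ℝ} (hK : 1 ≤ K) (t u : ℝ) :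
    jb t + K * jb u ≤ 3 * K * jb u * jb (t - u) := by
  have h : jb t + K * jb u ≤ K * (jb t + jb u) := by nlinarith [jb_pos t]
  nlinarith [jb_add_jb_le t u]

lemma sqrt_sq_add_sq_eq_abs_mul_jb_div {k : ℝ} (hk : k ≠ 0) (ξ : ℝ) :
    Real.sqrt (k ^ 2 + ξ ^ 2) = |k| * jb (ξ / k) := by
  rw [← Real.sqrt_sq_eq_abs, jb, ← Real.sqrt_mul (sq_nonneg _)]
  congr 1
  field_simp

lemma weight_product_le {K : ℝ} (hK : 1 ≤ K) (t u v : ℝ) :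
    jb t * (jb t + K * jb u) / (K * jb u ^ 2 * jb (t - u)) *
        ((jb t + |v|) / (jb t * jb (t - v) ^ 2)) ≤
      9 * jb v / (jb u * jb (t - v)) := by
  have hK0 : 0 < K := one_pos.trans_le hK
  have := jb_pos t; have := jb_pos u; have := jb_pos v
  have := jb_pos (t - u); have := jb_pos (t - v)
  have hprod : (jb t + K * jb u) * (jb t + |v|) ≤
      (3 * K * jb u * jb (t - u)) * (3 * jb v * jb (t - v)) :=
    mul_le_mul (jb_add_mul_jb_le hK t u) (jb_add_abs_le t v) (by positivity) (by positivity)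
  calc jb t * (jb t + K * jb u) / (K * jb u ^ 2 * jb (t - u)) *
        ((jb t + |v|) / (jb t * jb (t - v) ^ 2))
      = (jb t + K * jb u) * (jb t + |v|) / (K * jb u ^ 2 * jb (t - u) * jb (t - v) ^ 2) := by
        field_simp
    _ ≤ (3 * K * jb u * jb (t - u)) * (3 * jb v * jb (t - v)) /
          (K * jb u ^ 2 * jb (t - u) * jb (t - v) ^ 2) := by gcongr
    _ = 9 * jb v / (jb u * jb (t - v)) := by
        field_simp
        ring

theorem stmt3 : ∃ C : ℝ, 0 < C ∧ ∀ (t : ℝ), 0 ≤ t →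
    ∀ (k l : ℤ), k ≠ 0 → l ≠ 0 → ∀ ξ η : ℝ,
    (jb t * (jb t + Real.sqrt ((k : ℝ) ^ 2 + ξ ^ 2)) /
        (|(k : ℝ)| * (jb (ξ / (k : ℝ))) ^ 2 * jb (t - ξ / (k : ℝ)))) *
      ((jb t + |η / (l : ℝ)|) / (jb t * (jb (t - η / (l : ℝ))) ^ 2)) ≤
      C * jb (η / (l : ℝ)) / (jb (ξ / (k : ℝ)) * jb (t - η / (l : ℝ))) := by
  refine ⟨9, by norm_num, fun t _ k l hk _ ξ η => ?_⟩
  have hk1 : (1 : ℝ) ≤ |(k : ℝ)| := by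
    rw [← Int.cast_abs]
    exact_mod_cast Int.one_le_abs hk
  rw [sqrt_sq_add_sq_eq_abs_mul_jb_div (Int.cast_ne_zero.mpr hk)]
  exact weight_product_le hk1 t _ _
end

section
/- There exists an absolute constant C > 0 such that for every t ≥ 0, every nonzero integer k, and every ξ ∈ ℝ: ⟨t⟩(⟨t⟩ + |(k,ξ)|)/(|k|·⟨ξ/k⟩²·⟨t − ξ/k⟩²) ≤ C · |k|⟨t⟩/(|ξ| + |k|⟨t⟩). -/
set_option maxHeartbeats 1000000


theorem stmt4 : ∃ C : ℝ, 0 < C ∧ ∀ (t : ℝ), 0 ≤ t → ∀ (k : ℤ), k ≠ 0 → ∀ ξ : ℝ,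
    jb t * (jb t + Real.sqrt ((k : ℝ) ^ 2 + ξ ^ 2)) /
        (|(k : ℝ)| * (jb (ξ / (k : ℝ))) ^ 2 * (jb (t - ξ / (k : ℝ))) ^ 2) ≤
      C * (|(k : ℝ)| * jb t) / (|ξ| + |(k : ℝ)| * jb t) := by
  refine ⟨6, by norm_num, ?_⟩
  intro t ht k hk ξ
  have hk0 : (k : ℝ) ≠ 0 := by exact_mod_cast hk
  set η : ℝ := ξ / (k : ℝ) with hη
  set A : ℝ := jb t with hA
  set B : ℝ := jb η with hB
  set D : ℝ := jb (t - η) with hD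
  set K : ℝ := |(k : ℝ)| with hKdef
  have hK1 : (1 : ℝ) ≤ K := by
    have := Int.one_le_abs hk
    have : (1 : ℝ) ≤ |(k : ℤ)| := by exact_mod_cast this
    simpa [hKdef, Int.cast_abs] using this
  have hK0 : 0 < K := lt_of_lt_of_le one_pos hK1
  have hA2 : A ^ 2 = 1 + t ^ 2 := Real.sq_sqrt (by positivity)
  have hB2 : B ^ 2 = 1 + η ^ 2 := Real.sq_sqrt (by positivity)
  have hD2 : D ^ 2 = 1 + (t - η) ^ 2 := Real.sq_sqrt (by positivity)
  have hAnn : 0 ≤ A := Real.sqrt_nonneg _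
  have hBnn : 0 ≤ B := Real.sqrt_nonneg _
  have hDnn : 0 ≤ D := Real.sqrt_nonneg _
  have hA1 : (1 : ℝ) ≤ A := by nlinarith [sq_nonneg t]
  have hB1 : (1 : ℝ) ≤ B := by nlinarith [sq_nonneg η]
  have hD1 : (1 : ℝ) ≤ D := by nlinarith [sq_nonneg (t - η)]
  have hA0 : 0 < A := lt_of_lt_of_le one_pos hA1
  have hB0 : 0 < B := lt_of_lt_of_le one_pos hB1
  have hD0 : 0 < D := lt_of_lt_of_le one_pos hD1
  -- sqrt(k² + ξ²) = K * B
  have hS : Real.sqrt ((k : ℝ) ^ 2 + ξ ^ 2) = K * B := by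
    have h1 : (k : ℝ) ^ 2 + ξ ^ 2 = (k : ℝ) ^ 2 * (1 + η ^ 2) := by
      rw [hη]; field_simp
    rw [h1, Real.sqrt_mul (by positivity), Real.sqrt_sq_eq_abs]
    rfl
  -- |ξ| ≤ K * B
  have hξB : |ξ| ≤ K * B := by
    have hηB : |η| ≤ B := by
      rw [hB, jb, ← Real.sqrt_sq_eq_abs]
      exact Real.sqrt_le_sqrt (by nlinarith)
    have : |ξ| = K * |η| := by
      rw [hη, abs_div, hKdef]
      field_simp
    rw [this]
    exact mul_le_mul_of_nonneg_left hηB (le_of_lt hK0)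
  -- key: A² ≤ 2 B² D²
  have hkey : A ^ 2 ≤ 2 * (B ^ 2 * D ^ 2) := by
    rw [hA2, hB2, hD2]
    nlinarith [sq_nonneg (η - (t - η)), sq_nonneg (η * (t - η))]
  -- (A+B)² ≤ 6 B² D²
  have hstep : (A + B) ^ 2 ≤ 6 * (B ^ 2 * D ^ 2) := by
    have hBD : B ^ 2 ≤ B ^ 2 * D ^ 2 := by nlinarith
    nlinarith [sq_nonneg (A - B)]
  rw [hS]
  rw [div_le_div_iff₀ (by positivity) (by positivity)]
  calc A * (A + K * B) * (|ξ| + K * A)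
      ≤ A * (A + K * B) * (K * B + K * A) := by
        gcongr
    _ = K * (A * ((A + K * B) * (B + A))) := by ring
    _ ≤ K * (A * ((K * A + K * B) * (B + A))) := by
        gcongr
        nlinarith
    _ = (K ^ 2 * A) * (A + B) ^ 2 := by ring
    _ ≤ (K ^ 2 * A) * (6 * (B ^ 2 * D ^ 2)) := by
        gcongr
    _ = 6 * (K * A) * (K * (B ^ 2) * (D ^ 2)) := by ring
end

section
/- There exists an absolute constant C > 0 such that the following holds. Let k, l, σ be integers with k = l + σ and k ≠ 0, l ≠ 0, σ ≠ 0, let ξ, η, ρ be reals with ξ = η + ρ, and let t ≥ 0. Then [⟨t⟩(⟨t⟩ + |(k,ξ)|)/(|k|·⟨ξ/k⟩²)] · [(|η/l| + ⟨t⟩)/(⟨t⟩·⟨t − η/l⟩)] · [(|ρ/σ| + ⟨t⟩)/(⟨t⟩·⟨t − ρ/σ⟩)] · [⟨t − η/l⟩/⟨t − ξ/k⟩] ≤ C · ⟨σ,ρ⟩³. -/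
/-- Double Japanese bracket `⟨σ,ρ⟩ = (1 + σ² + ρ²)^{1/2}`. -/
noncomputable def jb2 (σ : ℤ) (ρ : ℝ) : ℝ := Real.sqrt (1 + (σ : ℝ) ^ 2 + ρ ^ 2)

set_option maxHeartbeats 1000000

lemma jb_add (x y : ℝ) : jb (x + y) ≤ Real.sqrt 2 * jb x * jb y := by
  rw [jb, jb, jb, ← Real.sqrt_mul (by norm_num), ← Real.sqrt_mul (by positivity)]
  exact Real.sqrt_le_sqrt (by nlinarith [sq_nonneg (x - y), sq_nonneg (x*y)])

lemma one_le_mul2 {a b : ℝ} (ha : 1 ≤ a) (hb : 1 ≤ b) : 1 ≤ a * b := by nlinarith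

lemma core (u A VA VC S kk bb cc e : ℝ)
    (hu : 1 ≤ u) (hA : 1 ≤ A) (hVA : 1 ≤ VA) (hVC : 1 ≤ VC) (hS : 1 ≤ S) (hkk : 1 ≤ kk)
    (hbb : 0 ≤ bb) (hcc : 0 ≤ cc)
    (h1 : u ≤ e * A * VA) (h2 : u ≤ e * S * VC)
    (hb : bb ≤ 3 * S * A) (hc : cc ≤ S)
    (he : e ≤ 3/2) :
    u * (u + kk * A) * (bb + u) * (cc + u) ≤ 64 * S ^ 3 * (kk * A ^ 2 * u ^ 2 * VC * VA) := by
  have hu0 : (0:ℝ) < u := by linarith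
  have hA0 : (0:ℝ) < A := by linarith
  have s1 : cc + u ≤ 2 * S * u := by nlinarith
  have s2 : bb + u ≤ 3 * S * (A + u) := by nlinarith
  have s3 : (u + kk * A) * (A + u) ≤ 5 * (kk * A ^ 2 * u * VA) := by
    have q1 : 1 ≤ kk * A * VA := one_le_mul2 (one_le_mul2 hkk hA) hVA
    have q2 : 1 ≤ u * VA := one_le_mul2 hu hVA
    have q3 : 1 ≤ A * VA := one_le_mul2 hA hVA
    have t1 : u * A ≤ kk * A ^ 2 * u * VA := by
      nlinarith [mul_le_mul_of_nonneg_left q1 (by positivity : (0:ℝ) ≤ u * A)]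
    have e1 : u * u ≤ e * A * VA * u := mul_le_mul_of_nonneg_right h1 hu0.le
    have e2 : e * (A * VA * u) ≤ (3/2) * (A * VA * u) := mul_le_mul_of_nonneg_right he (by positivity)
    have e3 : A * VA * u ≤ kk * (A * A) * VA * u := by
      nlinarith [mul_le_mul_of_nonneg_right (one_le_mul2 hkk hA) (by positivity : (0:ℝ) ≤ A * VA * u)]
    have t2 : u * u ≤ (3/2) * (kk * A ^ 2 * u * VA) := by nlinarith
    have t3 : kk * A ^ 2 ≤ kk * A ^ 2 * u * VA := by
      nlinarith [mul_le_mul_of_nonneg_left q2 (by positivity : (0:ℝ) ≤ kk * A ^ 2)]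
    have t4 : kk * A * u ≤ kk * A ^ 2 * u * VA := by
      nlinarith [mul_le_mul_of_nonneg_left q3 (by positivity : (0:ℝ) ≤ kk * A * u)]
    nlinarith [t1, t2, t3, t4]
  have s4 : u ≤ (3/2) * S * VC := by
    nlinarith [mul_le_mul_of_nonneg_right he (by positivity : (0:ℝ) ≤ S * VC)]
  calc u * (u + kk * A) * (bb + u) * (cc + u)
      ≤ u * (u + kk * A) * (3 * S * (A + u)) * (2 * S * u) := by
        apply mul_le_mul (mul_le_mul_of_nonneg_left s2 (by positivity)) s1 (by positivity) (by positivity)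
    _ = 6 * S ^ 2 * u * ((u + kk * A) * (A + u)) * u := by ring
    _ ≤ 6 * S ^ 2 * u * (5 * (kk * A ^ 2 * u * VA)) * ((3/2) * S * VC) := by
        apply mul_le_mul (mul_le_mul_of_nonneg_left s3 (by positivity)) s4 (by positivity) (by positivity)
    _ = 45 * S ^ 3 * (kk * A ^ 2 * u ^ 2 * VC * VA) := by ring
    _ ≤ 64 * S ^ 3 * (kk * A ^ 2 * u ^ 2 * VC * VA) := by
        nlinarith [(by positivity : (0:ℝ) ≤ S ^ 3 * (kk * A ^ 2 * u ^ 2 * VC * VA))]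

theorem stmt5 : ∃ C : ℝ, 0 < C ∧ ∀ (k l σ : ℤ), k = l + σ → k ≠ 0 → l ≠ 0 → σ ≠ 0 →
    ∀ (ξ η ρ : ℝ), ξ = η + ρ → ∀ (t : ℝ), 0 ≤ t →
    (jb t * (jb t + Real.sqrt ((k : ℝ) ^ 2 + ξ ^ 2)) /
        (|(k : ℝ)| * (jb (ξ / (k : ℝ))) ^ 2)) *
      ((|η / (l : ℝ)| + jb t) / (jb t * jb (t - η / (l : ℝ)))) *
      ((|ρ / (σ : ℝ)| + jb t) / (jb t * jb (t - ρ / (σ : ℝ)))) *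
      (jb (t - η / (l : ℝ)) / jb (t - ξ / (k : ℝ))) ≤
      C * (jb2 σ ρ) ^ 3 := by
  refine ⟨64, by norm_num, ?_⟩
  intro k l σ hk hk0 hl0 hσ0 ξ η ρ hξ t ht
  have hkne : (k:ℝ) ≠ 0 := Int.cast_ne_zero.mpr hk0
  have hlne : (l:ℝ) ≠ 0 := Int.cast_ne_zero.mpr hl0
  have hσne : (σ:ℝ) ≠ 0 := Int.cast_ne_zero.mpr hσ0
  have kk1 : (1:ℝ) ≤ |(k:ℝ)| := by
    have h := Int.one_le_abs hk0
    calc (1:ℝ) = ((1:ℤ):ℝ) := by norm_num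
      _ ≤ ((|k|:ℤ):ℝ) := by exact_mod_cast h
      _ = |(k:ℝ)| := by push_cast; ring
  have ll1 : (1:ℝ) ≤ |(l:ℝ)| := by
    have h := Int.one_le_abs hl0
    calc (1:ℝ) = ((1:ℤ):ℝ) := by norm_num
      _ ≤ ((|l|:ℤ):ℝ) := by exact_mod_cast h
      _ = |(l:ℝ)| := by push_cast; ring
  have ss1 : (1:ℝ) ≤ |(σ:ℝ)| := by
    have h := Int.one_le_abs hσ0
    calc (1:ℝ) = ((1:ℤ):ℝ) := by norm_num
      _ ≤ ((|σ|:ℤ):ℝ) := by exact_mod_cast h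
      _ = |(σ:ℝ)| := by push_cast; ring
  have hK : Real.sqrt ((k:ℝ)^2 + ξ^2) = |(k:ℝ)| * jb (ξ / k) := by
    have h : (k:ℝ)^2 + ξ^2 = (k:ℝ)^2 * (1 + (ξ/k)^2) := by field_simp
    rw [h, Real.sqrt_mul (sq_nonneg _), Real.sqrt_sq_eq_abs, jb]
  have hS1 : 1 ≤ jb2 σ ρ := by
    rw [jb2, Real.one_le_sqrt]
    nlinarith [sq_nonneg (σ:ℝ), sq_nonneg ρ]
  have hσS : |(σ:ℝ)| ≤ jb2 σ ρ := by
    rw [jb2, ← Real.sqrt_sq_eq_abs]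
    exact Real.sqrt_le_sqrt (by nlinarith [sq_nonneg ρ])
  have hρS : |ρ| ≤ jb2 σ ρ := by
    rw [jb2, ← Real.sqrt_sq_eq_abs]
    exact Real.sqrt_le_sqrt (by nlinarith [sq_nonneg (σ:ℝ)])
  have hσ2 : (1:ℝ) ≤ (σ:ℝ)^2 := by nlinarith [sq_abs (σ:ℝ), abs_nonneg (σ:ℝ)]
  have hcS : jb (ρ / σ) ≤ jb2 σ ρ := by
    rw [jb, jb2]
    apply Real.sqrt_le_sqrt
    have h1 : (ρ/σ)^2 ≤ ρ^2 := by
      rw [div_pow]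
      exact div_le_self (sq_nonneg ρ) hσ2
    nlinarith [sq_nonneg (σ:ℝ)]
  -- bound on |η/l|
  have hkl : |(k:ℝ)| ≤ |(l:ℝ)| * (1 + |(σ:ℝ)|) := by
    have h : |(k:ℝ)| ≤ |(l:ℝ)| + |(σ:ℝ)| := by
      rw [hk]; push_cast; exact abs_add_le _ _
    nlinarith [abs_nonneg (σ:ℝ)]
  have hξa : |ξ| = |ξ/(k:ℝ)| * |(k:ℝ)| := by
    rw [← abs_mul]; congr 1; field_simp
  have hη : |η| ≤ |ξ| + |ρ| := by
    calc |η| = |ξ + (-ρ)| := by rw [hξ]; ring_nf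
      _ ≤ |ξ| + |(-ρ)| := abs_add_le _ _
      _ = |ξ| + |ρ| := by rw [abs_neg]
  have hbl : |η/(l:ℝ)| * |(l:ℝ)| = |η| := by
    rw [← abs_mul]; congr 1; field_simp
  have hb1 : |η/(l:ℝ)| ≤ |ξ/(k:ℝ)| * (1 + |(σ:ℝ)|) + |ρ| := by
    have step : |η/(l:ℝ)| * |(l:ℝ)| ≤ (|ξ/(k:ℝ)| * (1 + |(σ:ℝ)|) + |ρ|) * |(l:ℝ)| := by
      rw [hbl]
      nlinarith [mul_le_mul_of_nonneg_left hkl (abs_nonneg (ξ/(k:ℝ))), hξa, hη,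
        mul_le_mul_of_nonneg_left ll1 (abs_nonneg ρ), abs_nonneg (ξ/(k:ℝ)), abs_nonneg ρ]
    exact le_of_mul_le_mul_right step (by linarith)
  have hb : |η/(l:ℝ)| ≤ 3 * jb2 σ ρ * jb (ξ/(k:ℝ)) := by
    have hA := one_le_jb (ξ/(k:ℝ))
    have haA := abs_le_jb (ξ/(k:ℝ))
    nlinarith [mul_nonneg (sub_nonneg.mpr haA) (by positivity : (0:ℝ) ≤ 1 + |(σ:ℝ)|),
      mul_nonneg (by linarith : (0:ℝ) ≤ jb (ξ/(k:ℝ))) (by linarith : (0:ℝ) ≤ 2 * jb2 σ ρ - 1 - |(σ:ℝ)|),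
      mul_nonneg (by linarith : (0:ℝ) ≤ jb2 σ ρ) (by linarith : (0:ℝ) ≤ jb (ξ/(k:ℝ)) - 1)]
  -- sqrt 2 bounds
  have he1 : (1:ℝ) ≤ Real.sqrt 2 := by
    rw [Real.one_le_sqrt] <;> norm_num
  have he2 : Real.sqrt 2 ≤ 3/2 := by
    have h : Real.sqrt 2 ≤ Real.sqrt ((3/2)^2) := Real.sqrt_le_sqrt (by norm_num)
    rwa [Real.sqrt_sq (by norm_num)] at h
  have h1 : jb t ≤ Real.sqrt 2 * jb (ξ/(k:ℝ)) * jb (t - ξ/(k:ℝ)) := by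
    have h := jb_add (ξ/(k:ℝ)) (t - ξ/(k:ℝ))
    rwa [show ξ/(k:ℝ) + (t - ξ/(k:ℝ)) = t by ring] at h
  have h2 : jb t ≤ Real.sqrt 2 * jb2 σ ρ * jb (t - ρ/(σ:ℝ)) := by
    have h := jb_add (ρ/(σ:ℝ)) (t - ρ/(σ:ℝ))
    rw [show ρ/(σ:ℝ) + (t - ρ/(σ:ℝ)) = t by ring] at h
    refine h.trans ?_
    exact mul_le_mul_of_nonneg_right
      (mul_le_mul_of_nonneg_left hcS (Real.sqrt_nonneg 2)) (jb_pos _).le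
  -- rewrite LHS as a single fraction
  have hu0 := jb_pos t
  have hA0 := jb_pos (ξ/(k:ℝ))
  have hVA0 := jb_pos (t - ξ/(k:ℝ))
  have hVB0 := jb_pos (t - η/(l:ℝ))
  have hVC0 := jb_pos (t - ρ/(σ:ℝ))
  have hkk0 : (0:ℝ) < |(k:ℝ)| := by linarith
  have hu1 := one_le_jb t
  have hA1 := one_le_jb (ξ/(k:ℝ))
  have hVA1 := one_le_jb (t - ξ/(k:ℝ))
  have hVC1 := one_le_jb (t - ρ/(σ:ℝ))
  have hccS : |ρ/(σ:ℝ)| ≤ jb2 σ ρ := (abs_le_jb _).trans hcS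
  have hbb0 : (0:ℝ) ≤ |η/(l:ℝ)| := abs_nonneg _
  have hcc0 : (0:ℝ) ≤ |ρ/(σ:ℝ)| := abs_nonneg _
  set u := jb t with hud
  set A := jb (ξ/(k:ℝ)) with hAd
  set VA := jb (t - ξ/(k:ℝ)) with hVAd
  set VB := jb (t - η/(l:ℝ)) with hVBd
  set VC := jb (t - ρ/(σ:ℝ)) with hVCd
  set kk := |(k:ℝ)| with hkkd
  set S := jb2 σ ρ with hSd
  set bb := |η/(l:ℝ)| with hbbd
  set cc := |ρ/(σ:ℝ)| with hccd
  have hEq : (u * (u + Real.sqrt ((k : ℝ) ^ 2 + ξ ^ 2)) / (kk * A ^ 2)) *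
      ((bb + u) / (u * VB)) * ((cc + u) / (u * VC)) * (VB / VA) =
      (u * (u + kk * A) * (bb + u) * (cc + u)) / (kk * A ^ 2 * u ^ 2 * VC * VA) := by
    rw [hK]
    field_simp
  rw [hEq, div_le_iff₀ (by positivity)]
  have hcore := core u A VA VC S kk bb cc (Real.sqrt 2)
    hu1 hA1 hVA1 hVC1 hS1 kk1 hbb0 hcc0 h1 h2 hb hccS he2
  calc u * (u + kk * A) * (bb + u) * (cc + u)
      ≤ 64 * S ^ 3 * (kk * A ^ 2 * u ^ 2 * VC * VA) := hcore
    _ = 64 * S ^ 3 * (kk * A ^ 2 * u ^ 2 * VC * VA) := by ring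
end

section
/- There exists an absolute constant C > 0 such that for all t ≥ 0, all nonzero integers k, σ, and all reals ξ, ρ: ⟨t⟩²/(|k|·⟨ξ/k⟩²·⟨t − ξ/k⟩·⟨t − ρ/σ⟩) ≤ C · ⟨σ,ρ⟩². -/
lemma one_le_jb2 (σ : ℤ) (ρ : ℝ) : 1 ≤ jb2 σ ρ :=
  Real.one_le_sqrt.mpr (by nlinarith [sq_nonneg (σ : ℝ), sq_nonneg ρ])

lemma jb_add_le (a b : ℝ) : jb (a + b) ≤ Real.sqrt 2 * jb a * jb b := by
  rw [jb, jb, jb, ← Real.sqrt_mul zero_le_two, ← Real.sqrt_mul (by positivity)]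
  exact Real.sqrt_le_sqrt (by nlinarith [sq_nonneg (a - b), sq_nonneg (a * b)])

lemma jb_sq_le (t a b : ℝ) : jb t ^ 2 ≤ 2 * (jb a * jb (t - a)) * (jb b * jb (t - b)) := by
  have hs : Real.sqrt 2 * Real.sqrt 2 = 2 := Real.mul_self_sqrt zero_le_two
  calc jb t ^ 2 = jb (a + (t - a)) * jb (b + (t - b)) := by simp only [add_sub_cancel, sq]
    _ ≤ (Real.sqrt 2 * jb a * jb (t - a)) * (Real.sqrt 2 * jb b * jb (t - b)) :=
        mul_le_mul (jb_add_le _ _) (jb_add_le _ _) (Real.sqrt_nonneg _)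
          (mul_nonneg (mul_nonneg (Real.sqrt_nonneg 2) (Real.sqrt_nonneg _)) (Real.sqrt_nonneg _))
    _ = 2 * (jb a * jb (t - a)) * (jb b * jb (t - b)) := by
        linear_combination (jb a * jb (t - a) * jb b * jb (t - b)) * hs

lemma jb_sq_div_le {κ : ℝ} (hκ : 1 ≤ κ) (t a b : ℝ) :
    jb t ^ 2 / (κ * jb a ^ 2 * jb (t - a) * jb (t - b)) ≤ 2 * jb b := by
  have ha := one_le_jb a
  have hta := one_le_jb (t - a)
  have hb := one_le_jb b
  have htb := one_le_jb (t - b)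
  have hκa : 1 ≤ κ * jb a := one_le_mul_of_one_le_of_one_le hκ ha
  rw [div_le_iff₀ (by positivity)]
  calc jb t ^ 2 ≤ 2 * (jb a * jb (t - a)) * (jb b * jb (t - b)) := jb_sq_le t a b
    _ ≤ 2 * (jb a * jb (t - a)) * (jb b * jb (t - b)) * (κ * jb a) :=
        le_mul_of_one_le_right (by positivity) hκa
    _ = 2 * jb b * (κ * jb a ^ 2 * jb (t - a) * jb (t - b)) := by ring

lemma jb_div_le_jb2 {σ : ℤ} (hσ : σ ≠ 0) (ρ : ℝ) : jb (ρ / σ) ≤ jb2 σ ρ := by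
  have hσ2 : (1 : ℝ) ≤ (σ : ℝ) ^ 2 := by
    rw [← sq_abs, ← Int.cast_abs]
    exact one_le_pow₀ (by exact_mod_cast Int.one_le_abs hσ)
  have hρσ : (ρ / σ) ^ 2 ≤ ρ ^ 2 := by
    rw [div_pow]; exact div_le_self (sq_nonneg ρ) hσ2
  exact Real.sqrt_le_sqrt (by linarith)

theorem stmt6 : ∃ C : ℝ, 0 < C ∧ ∀ (t : ℝ), 0 ≤ t →
    ∀ (k σ : ℤ), k ≠ 0 → σ ≠ 0 → ∀ ξ ρ : ℝ,
    (jb t) ^ 2 /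
        (|(k : ℝ)| * (jb (ξ / (k : ℝ))) ^ 2 * jb (t - ξ / (k : ℝ)) *
          jb (t - ρ / (σ : ℝ))) ≤
      C * (jb2 σ ρ) ^ 2 := by
  refine ⟨2, two_pos, fun t _ k σ hk hσ ξ ρ => ?_⟩
  have hk : (1 : ℝ) ≤ |(k : ℝ)| := by
    rw [← Int.cast_abs]; exact_mod_cast Int.one_le_abs hk
  calc _ ≤ 2 * jb (ρ / σ) := jb_sq_div_le hk t _ _
    _ ≤ 2 * jb2 σ ρ ^ 2 := by
        gcongr
        exact (jb_div_le_jb2 hσ ρ).trans (le_self_pow₀ (one_le_jb2 σ ρ) two_ne_zero)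
end
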